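/- arXiv:1504.03679 — 11 statements merged into one kernel-verified Lean document; each statement's English description precedes it below -/
import Mathlib

section
/- The generalized average Fisher information f of a bivariate Gaussian copula is a convex function of the correlation coefficient on (−1,1); that is, under the assumption |σX·b| ≤ σY·|a|, the function f(ρ) = (ρ²(a²σY² + b²σX²) − 2ρ·a·b·σX·σY)/(σX²σY²(1−ρ²)) is convex on the open interval (−1,1). -/
/-! Partial fractions write `(ρ²(u² + v²) − 2ρuv) / (1 − ρ²)` as
`(u − v)²/2 · (1 − ρ)⁻¹ + (u + v)²/2 · (1 + ρ)⁻¹` minus a constant, a nonnegative combination of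
functions convex on `(−1, 1)`. With `u = a σY`, `v = b σX`, the function `f` is this one times the
nonnegative constant `(σX² σY²)⁻¹`. -/

open Set

lemma convexOn_inv_affine (c d : ℝ) :
    ConvexOn ℝ {x | 0 < c + d * x} fun x => (c + d * x)⁻¹ := by
  let g : ℝ →ᵃ[ℝ] ℝ := AffineMap.const ℝ ℝ c + d • AffineMap.id ℝ ℝ
  have h : ConvexOn ℝ (g ⁻¹' Ioi 0) ((fun x : ℝ => x ^ (-1 : ℤ)) ∘ g) :=
    (convexOn_zpow (-1)).comp_affineMap g
  have hg : g ⁻¹' Ioi 0 = {x | 0 < c + d * x} := by ext; simp [g]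
  rw [hg] at h
  exact h.congr fun x _ => by simp [g]

lemma sq_div_one_sub_sq_eq_inv_add_inv (u v : ℝ) {ρ : ℝ} (h₁ : 1 - ρ ≠ 0) (h₂ : 1 + ρ ≠ 0) :
    (ρ ^ 2 * (u ^ 2 + v ^ 2) - 2 * ρ * u * v) / (1 - ρ ^ 2) =
      (u - v) ^ 2 / 2 * (1 - ρ)⁻¹ + (u + v) ^ 2 / 2 * (1 + ρ)⁻¹ - (u ^ 2 + v ^ 2) := by
  rw [show 1 - ρ ^ 2 = (1 - ρ) * (1 + ρ) by ring]
  field_simp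
  ring

lemma convexOn_sq_div_one_sub_sq (u v : ℝ) :
    ConvexOn ℝ (Ioo (-1) 1) fun ρ => (ρ ^ 2 * (u ^ 2 + v ^ 2) - 2 * ρ * u * v) / (1 - ρ ^ 2) := by
  have h₁ : ConvexOn ℝ (Ioo (-1) 1) fun ρ : ℝ => (1 + -1 * ρ)⁻¹ :=
    (convexOn_inv_affine 1 (-1)).subset (fun ρ hρ => show (0 : ℝ) < 1 + -1 * ρ by linarith [hρ.2])
      (convex_Ioo _ _)
  have h₂ : ConvexOn ℝ (Ioo (-1) 1) fun ρ : ℝ => (1 + 1 * ρ)⁻¹ :=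
    (convexOn_inv_affine 1 1).subset (fun ρ hρ => show (0 : ℝ) < 1 + 1 * ρ by linarith [hρ.1])
      (convex_Ioo _ _)
  refine (((h₁.smul (by positivity : 0 ≤ (u - v) ^ 2 / 2)).add
    (h₂.smul (by positivity : 0 ≤ (u + v) ^ 2 / 2))).add_const (-(u ^ 2 + v ^ 2))).congr ?_
  intro ρ hρ
  simp only [Pi.add_apply, smul_eq_mul]
  rw [sq_div_one_sub_sq_eq_inv_add_inv u v (by linarith [hρ.2]) (by linarith [hρ.1])]
  ring

theorem gafi_convexOn_general (σX σY a b : ℝ) (f : ℝ → ℝ)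
    (hf : ∀ ρ : ℝ, f ρ =
      (ρ ^ 2 * (a ^ 2 * σY ^ 2 + b ^ 2 * σX ^ 2) - 2 * ρ * a * b * σX * σY) /
        (σX ^ 2 * σY ^ 2 * (1 - ρ ^ 2))) :
    ConvexOn ℝ (Set.Ioo (-1 : ℝ) 1) f := by
  have hK : 0 ≤ (σX ^ 2 * σY ^ 2)⁻¹ := by positivity
  refine ((convexOn_sq_div_one_sub_sq (a * σY) (b * σX)).smul hK).congr fun ρ _ => ?_
  rw [hf, div_mul_eq_div_div_swap, div_eq_inv_mul]
  simp only [smul_eq_mul]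
  ring

/-- The generalized average Fisher information (GAFI) of a bivariate
Gaussian copula, `f ρ = (ρ²(a²σY² + b²σX²) − 2ρ·a·b·σX·σY)/(σX²σY²(1−ρ²))`,
is convex on the open interval (−1, 1), under the assumption `|σX·b| ≤ σY·|a|`. -/
theorem gafi_convexOn (σX σY a b : ℝ) (hσX : 0 < σX) (hσY : 0 < σY) (ha : a ≠ 0)
    (hab : |σX * b| ≤ σY * |a|) (f : ℝ → ℝ)
    (hf : ∀ ρ : ℝ, f ρ =
      (ρ ^ 2 * (a ^ 2 * σY ^ 2 + b ^ 2 * σX ^ 2) - 2 * ρ * a * b * σX * σY) /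
        (σX ^ 2 * σY ^ 2 * (1 - ρ ^ 2))) :
    ConvexOn ℝ (Set.Ioo (-1 : ℝ) 1) f :=
  gafi_convexOn_general σX σY a b f hf
end

section
/- If |σX·b| < σY·|a|, then for every ρ ∈ (−1,1) the generalized average Fisher information satisfies f(ρ) ≥ −b²/σY², and the minimum is attained at ρ* = (σX·b)/(σY·a) ∈ (−1,1), where f(ρ*) = −b²/σY². -/
/-- If `|σX·b| < σY·|a|`, the GAFI `f` satisfies `f ρ ≥ −b²/σY²` for all
`ρ ∈ (−1,1)`, with the minimum attained at `ρ* = σX·b/(σY·a) ∈ (−1,1)`,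
where `f ρ* = −b²/σY²`. -/
theorem gafi_min (σX σY a b : ℝ) (hσX : 0 < σX) (hσY : 0 < σY) (ha : a ≠ 0)
    (hab : |σX * b| < σY * |a|) (f : ℝ → ℝ)
    (hf : ∀ ρ : ℝ, f ρ =
      (ρ ^ 2 * (a ^ 2 * σY ^ 2 + b ^ 2 * σX ^ 2) - 2 * ρ * a * b * σX * σY) /
        (σX ^ 2 * σY ^ 2 * (1 - ρ ^ 2))) :
    (∀ ρ ∈ Set.Ioo (-1 : ℝ) 1, f ρ ≥ -b ^ 2 / σY ^ 2) ∧
    σX * b / (σY * a) ∈ Set.Ioo (-1 : ℝ) 1 ∧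
    f (σX * b / (σY * a)) = -b ^ 2 / σY ^ 2 := by
  have hσXne : σX ≠ 0 := ne_of_gt hσX
  have hσYne : σY ≠ 0 := ne_of_gt hσY
  have key : ∀ ρ : ℝ, -1 < ρ → ρ < 1 →
      f ρ + b ^ 2 / σY ^ 2 = (ρ * a * σY - b * σX) ^ 2 / (σX ^ 2 * σY ^ 2 * (1 - ρ ^ 2)) := by
    intro ρ h1 h2
    have hpos : 0 < 1 - ρ ^ 2 := by nlinarith
    rw [hf]
    field_simp
    ring
  have hmem : σX * b / (σY * a) ∈ Set.Ioo (-1 : ℝ) 1 := by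
    have habs : |σX * b / (σY * a)| < 1 := by
      rw [abs_div, div_lt_one (by positivity : (0:ℝ) < |σY * a|)]
      calc |σX * b| < σY * |a| := hab
        _ = |σY * a| := by rw [abs_mul, abs_of_pos hσY]
    exact abs_lt.mp habs
  refine ⟨?_, hmem, ?_⟩
  · intro ρ hρ
    have h12 : 0 < 1 - ρ ^ 2 := by have := hρ.1; have := hρ.2; nlinarith
    have hpos : 0 < σX ^ 2 * σY ^ 2 * (1 - ρ ^ 2) := by positivity
    have h := key ρ hρ.1 hρ.2
    have h2 : 0 ≤ (ρ * a * σY - b * σX) ^ 2 / (σX ^ 2 * σY ^ 2 * (1 - ρ ^ 2)) :=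
      div_nonneg (sq_nonneg _) (le_of_lt hpos)
    have h3 : -b ^ 2 / σY ^ 2 = -(b ^ 2 / σY ^ 2) := by ring
    linarith
  · have hz : (σX * b / (σY * a)) * a * σY - b * σX = 0 := by
      field_simp
      ring
    have h := key _ hmem.1 hmem.2
    rw [hz] at h
    simp at h
    linarith [h, (by ring : -b ^ 2 / σY ^ 2 = -(b ^ 2 / σY ^ 2))]
end

section
/- If σX·b = σY·a (i.e., (σX/σY)·(b/a) = 1), then for every ρ ∈ (−1,1) the generalized average Fisher information equals f(ρ) = −2a²ρ/(σX²(1+ρ)); consequently f is strictly monotonically decreasing on (−1,1), f(ρ) ≥ 0 for ρ ∈ (−1,0], and f(ρ) < 0 for ρ ∈ (0,1). -/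
/-- If `σX·b = σY·a`, then for every `ρ ∈ (−1,1)` the GAFI equals
`f ρ = −2a²ρ/(σX²(1+ρ))`; consequently `f` is strictly decreasing on (−1,1),
`f ρ ≥ 0` for `ρ ∈ (−1,0]`, and `f ρ < 0` for `ρ ∈ (0,1)`. -/
theorem gafi_equal_ratio (σX σY a b : ℝ) (hσX : 0 < σX) (hσY : 0 < σY) (ha : a ≠ 0)
    (heq : σX * b = σY * a) (f : ℝ → ℝ)
    (hf : ∀ ρ : ℝ, f ρ =
      (ρ ^ 2 * (a ^ 2 * σY ^ 2 + b ^ 2 * σX ^ 2) - 2 * ρ * a * b * σX * σY) /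
        (σX ^ 2 * σY ^ 2 * (1 - ρ ^ 2))) :
    (∀ ρ ∈ Set.Ioo (-1 : ℝ) 1, f ρ = -(2 * a ^ 2 * ρ) / (σX ^ 2 * (1 + ρ))) ∧
    StrictAntiOn f (Set.Ioo (-1 : ℝ) 1) ∧
    (∀ ρ : ℝ, -1 < ρ → ρ ≤ 0 → 0 ≤ f ρ) ∧
    (∀ ρ : ℝ, 0 < ρ → ρ < 1 → f ρ < 0) := by
  have hb : b = σY * a / σX := by field_simp; linarith [heq]
  have hkey : ∀ ρ : ℝ, -1 < ρ → ρ < 1 →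
      f ρ = -(2 * a ^ 2 * ρ) / (σX ^ 2 * (1 + ρ)) := by
    intro ρ h1 h2
    have h1p : (0:ℝ) < 1 + ρ := by linarith
    have h1m : (0:ℝ) < 1 - ρ := by linarith
    have hρ2 : (0:ℝ) < 1 - ρ ^ 2 := by nlinarith
    rw [hf, hb]
    rw [div_eq_div_iff (by positivity) (by positivity)]
    field_simp
    ring
  have ha2 : 0 < a ^ 2 := by positivity
  have hσX2 : 0 < σX ^ 2 := by positivity
  refine ⟨fun ρ hρ => hkey ρ hρ.1 hρ.2, ?_, ?_, ?_⟩
  · intro x hx y hy hxy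
    rw [hkey x hx.1 hx.2, hkey y hy.1 hy.2]
    have hx1 : (0:ℝ) < 1 + x := by linarith [hx.1]
    have hy1 : (0:ℝ) < 1 + y := by linarith [hy.1]
    rw [div_lt_div_iff₀ (by positivity) (by positivity)]
    nlinarith [mul_pos ha2 (sub_pos.mpr hxy)]
  · intro ρ h1 h2
    rw [hkey ρ h1 (by linarith)]
    apply div_nonneg
    · nlinarith
    · nlinarith
  · intro ρ h1 h2
    rw [hkey ρ (by linarith) h2]
    apply div_neg_of_neg_of_pos
    · nlinarith
    · nlinarith
end

section
/- The generalized Kullback–Leibler divergence g of a bivariate Gaussian copula is a convex function of the correlation coefficient on (−1,1); that is, the function g(ρ) = (θ1−θ0)²·(ρ²(σX²+σY²) − 2ρσXσY)/(2σX²σY²(1−ρ²)) is convex on the open interval (−1,1). -/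
open Set

lemma convexOn_inv_one_sub : ConvexOn ℝ (Set.Ioo (-1 : ℝ) 1) (fun ρ : ℝ => (1 - ρ)⁻¹) := by
  have h := (strictConvexOn_zpow (m := -1) (by decide) (by decide)).convexOn
  have aff : ℝ →ᵃ[ℝ] ℝ := AffineMap.mk' (fun ρ : ℝ => 1 - ρ) (-LinearMap.id) 0 (by
    intro p; simp [sub_eq_add_neg, add_comm])
  have h2 := h.comp_affineMap (AffineMap.mk' (fun ρ : ℝ => 1 - ρ) (-LinearMap.id) 0 (by
    intro p; simp [sub_eq_add_neg, add_comm]))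
  have hpre : Set.Ioo (-1 : ℝ) 1 ⊆ (AffineMap.mk' (fun ρ : ℝ => 1 - ρ) (-LinearMap.id) 0 (by
    intro p; simp [sub_eq_add_neg, add_comm]) : ℝ →ᵃ[ℝ] ℝ) ⁻¹' Set.Ioi 0 := by
    intro x hx
    simp only [Set.mem_preimage, AffineMap.coe_mk', Set.mem_Ioi]
    linarith [hx.2]
  have := (h2.subset hpre (convex_Ioo _ _))
  refine this.congr ?_
  intro x _
  simp [zpow_neg]
lemma convexOn_inv_one_add : ConvexOn ℝ (Set.Ioo (-1 : ℝ) 1) (fun ρ : ℝ => (1 + ρ)⁻¹) := by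
  have h := (strictConvexOn_zpow (m := -1) (by decide) (by decide)).convexOn
  have h2 := h.comp_affineMap (AffineMap.mk' (fun ρ : ℝ => 1 + ρ) LinearMap.id 1 (by
    intro p; simp [add_comm]))
  have hpre : Set.Ioo (-1 : ℝ) 1 ⊆ (AffineMap.mk' (fun ρ : ℝ => 1 + ρ) LinearMap.id 1 (by
    intro p; simp [add_comm]) : ℝ →ᵃ[ℝ] ℝ) ⁻¹' Set.Ioi 0 := by
    intro x hx
    simp only [Set.mem_preimage, AffineMap.coe_mk', Set.mem_Ioi]
    linarith [hx.1]
  have := (h2.subset hpre (convex_Ioo _ _))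
  refine this.congr ?_
  intro x _
  simp [zpow_neg]

/-- The generalized Kullback–Leibler divergence (GKLD) of a bivariate Gaussian
copula, `g ρ = (θ1−θ0)²(ρ²(σX²+σY²) − 2ρσXσY)/(2σX²σY²(1−ρ²))`, is convex on (−1,1). -/
theorem gkld_convexOn (σX σY θ0 θ1 : ℝ) (hσX : 0 < σX) (hσXY : σX ≤ σY) (hθ : θ0 ≠ θ1)
    (g : ℝ → ℝ)
    (hg : ∀ ρ : ℝ, g ρ =
      (θ1 - θ0) ^ 2 * (ρ ^ 2 * (σX ^ 2 + σY ^ 2) - 2 * ρ * σX * σY) /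
        (2 * σX ^ 2 * σY ^ 2 * (1 - ρ ^ 2))) :
    ConvexOn ℝ (Set.Ioo (-1 : ℝ) 1) g := by
  set K : ℝ := (θ1 - θ0) ^ 2 / (2 * σX ^ 2 * σY ^ 2) with hK
  have hσY : 0 < σY := lt_of_lt_of_le hσX hσXY
  have hKpos : 0 ≤ K := by positivity
  set A : ℝ := K * (σY - σX) ^ 2 / 2 with hA
  set B : ℝ := K * (σX + σY) ^ 2 / 2 with hB
  set c : ℝ := -K * (σX ^ 2 + σY ^ 2) with hc
  have hA0 : 0 ≤ A := by positivity
  have hB0 : 0 ≤ B := by positivity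
  have hconv : ConvexOn ℝ (Set.Ioo (-1 : ℝ) 1)
      (fun ρ : ℝ => c + (A * (1 - ρ)⁻¹ + B * (1 + ρ)⁻¹)) := by
    exact (convexOn_const c (convex_Ioo _ _)).add
      ((convexOn_inv_one_sub.smul hA0).add (convexOn_inv_one_add.smul hB0))
  refine hconv.congr ?_
  intro x hx
  have h1 : (1 : ℝ) - x ≠ 0 := by have := hx.2; intro h; linarith [sub_eq_zero.mp h]
  have h2 : (1 : ℝ) + x ≠ 0 := by have := hx.1; intro h; nlinarith
  rw [hg x]
  have hσXne : σX ≠ 0 := ne_of_gt hσX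
  have hσYne : σY ≠ 0 := ne_of_gt hσY
  have hfac : (1 : ℝ) - x ^ 2 = (1 - x) * (1 + x) := by ring
  rw [hfac]
  simp only [hA, hB, hc, hK]
  field_simp
  ring
end

section
/- If σX < σY, then for every ρ ∈ (−1,1) the generalized Kullback–Leibler divergence satisfies g(ρ) ≥ −(θ1−θ0)²/(2σY²), and the minimum is attained at ρ* = σX/σY ∈ (0,1), where g(ρ*) = −(θ1−θ0)²/(2σY²). -/
/-- If `σX < σY`, the GKLD `g` satisfies `g ρ ≥ −(θ1−θ0)²/(2σY²)` for all
`ρ ∈ (−1,1)`, and the minimum is attained at `ρ* = σX/σY ∈ (0,1)`,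
where `g ρ* = −(θ1−θ0)²/(2σY²)`. -/
theorem gkld_min (σX σY θ0 θ1 : ℝ) (hσX : 0 < σX) (hσXY : σX < σY) (hθ : θ0 ≠ θ1)
    (g : ℝ → ℝ)
    (hg : ∀ ρ : ℝ, g ρ =
      (θ1 - θ0) ^ 2 * (ρ ^ 2 * (σX ^ 2 + σY ^ 2) - 2 * ρ * σX * σY) /
        (2 * σX ^ 2 * σY ^ 2 * (1 - ρ ^ 2))) :
    (∀ ρ ∈ Set.Ioo (-1 : ℝ) 1, g ρ ≥ -(θ1 - θ0) ^ 2 / (2 * σY ^ 2)) ∧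
    σX / σY ∈ Set.Ioo (0 : ℝ) 1 ∧
    g (σX / σY) = -(θ1 - θ0) ^ 2 / (2 * σY ^ 2) := by
  have hσY : 0 < σY := hσX.trans hσXY
  refine ⟨?_, ⟨div_pos hσX hσY, (div_lt_one hσY).mpr hσXY⟩, ?_⟩
  · rintro ρ ⟨h1, h2⟩
    have hρ : 0 < 1 - ρ ^ 2 := by nlinarith
    have hD : 0 < 2 * σX ^ 2 * σY ^ 2 * (1 - ρ ^ 2) := by positivity
    have h2σY : 0 < 2 * σY ^ 2 := by positivity
    rw [hg, ge_iff_le, div_le_div_iff₀ h2σY hD]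
    nlinarith [mul_nonneg (sq_nonneg (θ1 - θ0)) (sq_nonneg (ρ * σY - σX))]
  · rw [hg]
    have h1 : 1 - (σX / σY) ^ 2 = (σY ^ 2 - σX ^ 2) / σY ^ 2 := by
      field_simp
    have hne : σY ^ 2 - σX ^ 2 ≠ 0 := by nlinarith
    field_simp
    ring
end

section
/- If σX = σY = σ > 0, then for every ρ ∈ (−1,1) the generalized Kullback–Leibler divergence equals g(ρ) = −((θ1−θ0)²/σ²)·ρ/(1+ρ); consequently g is strictly monotonically decreasing on (−1,1), g(ρ) ≥ 0 for ρ ∈ (−1,0], and g(ρ) < 0 for ρ ∈ (0,1). -/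
lemma key_eq (σ θ0 θ1 : ℝ) (hσ : 0 < σ) (ρ : ℝ) (h1 : -1 < ρ) (h2 : ρ < 1) :
    (θ1 - θ0) ^ 2 * (ρ ^ 2 * (σ ^ 2 + σ ^ 2) - 2 * ρ * σ * σ) /
        (2 * σ ^ 2 * σ ^ 2 * (1 - ρ ^ 2)) = -((θ1 - θ0) ^ 2 / σ ^ 2) * (ρ / (1 + ρ)) := by
  have hσ' : σ ≠ 0 := ne_of_gt hσ
  have hp : (1 : ℝ) + ρ ≠ 0 := by nlinarith
  have hm : (1 : ℝ) - ρ ≠ 0 := by nlinarith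
  have : 1 - ρ ^ 2 = (1 - ρ) * (1 + ρ) := by ring
  rw [this]
  field_simp
  ring

/-- If `σX = σY = σ > 0`, then for every `ρ ∈ (−1,1)` the GKLD equals
`g ρ = −((θ1−θ0)²/σ²)·ρ/(1+ρ)`; consequently `g` is strictly decreasing on (−1,1),
`g ρ ≥ 0` for `ρ ∈ (−1,0]`, and `g ρ < 0` for `ρ ∈ (0,1)`. -/
theorem gkld_equal_variance (σ θ0 θ1 : ℝ) (hσ : 0 < σ) (hθ : θ0 ≠ θ1)
    (g : ℝ → ℝ)
    (hg : ∀ ρ : ℝ, g ρ =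
      (θ1 - θ0) ^ 2 * (ρ ^ 2 * (σ ^ 2 + σ ^ 2) - 2 * ρ * σ * σ) /
        (2 * σ ^ 2 * σ ^ 2 * (1 - ρ ^ 2))) :
    (∀ ρ ∈ Set.Ioo (-1 : ℝ) 1, g ρ = -((θ1 - θ0) ^ 2 / σ ^ 2) * (ρ / (1 + ρ))) ∧
    StrictAntiOn g (Set.Ioo (-1 : ℝ) 1) ∧
    (∀ ρ : ℝ, -1 < ρ → ρ ≤ 0 → 0 ≤ g ρ) ∧
    (∀ ρ : ℝ, 0 < ρ → ρ < 1 → g ρ < 0) := by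
  have heq : ∀ ρ ∈ Set.Ioo (-1 : ℝ) 1,
      g ρ = -((θ1 - θ0) ^ 2 / σ ^ 2) * (ρ / (1 + ρ)) := by
    intro ρ hρ
    rw [hg ρ]
    exact key_eq σ θ0 θ1 hσ ρ hρ.1 hρ.2
  have hc : 0 < (θ1 - θ0) ^ 2 / σ ^ 2 := by
    apply div_pos
    · have : θ1 - θ0 ≠ 0 := sub_ne_zero.mpr (Ne.symm hθ)
      positivity
    · positivity
  refine ⟨heq, ?_, ?_, ?_⟩
  · intro a ha b hb hab
    rw [heq a ha, heq b hb]
    have h1a : 0 < 1 + a := by nlinarith [ha.1]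
    have h1b : 0 < 1 + b := by nlinarith [hb.1]
    have hfrac : a / (1 + a) < b / (1 + b) := by
      rw [div_lt_div_iff₀ h1a h1b]
      nlinarith
    nlinarith
  · intro ρ h1 h2
    rw [heq ρ ⟨h1, by linarith⟩]
    have h1a : 0 < 1 + ρ := by linarith
    have : ρ / (1 + ρ) ≤ 0 := div_nonpos_of_nonpos_of_nonneg h2 (le_of_lt h1a)
    nlinarith
  · intro ρ h1 h2
    rw [heq ρ ⟨by linarith, h2⟩]
    have h1a : 0 < 1 + ρ := by linarith
    have : 0 < ρ / (1 + ρ) := div_pos h1 h1a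
    nlinarith
end

section
/- For probability measures μ and ν on a product of two measurable spaces α × β, the Kullback–Leibler divergence between the first marginals is at most the Kullback–Leibler divergence between the joint measures: klDiv(μ.map Prod.fst, ν.map Prod.fst) ≤ klDiv(μ, ν). -/
open MeasureTheory
open scoped Classical

/-- The Kullback–Leibler divergence of two measures, following the convention of
Mathlib's `ProbabilityTheory.klDiv`: it is `∫ log (dμ/dν) dμ` when `μ ≪ ν` and the
log-likelihood ratio is integrable, and `⊤` otherwise. -/
noncomputable def klDiv {α : Type*} [MeasurableSpace α] (μ ν : Measure α) : EReal :=
  if μ ≪ ν ∧ Integrable (llr μ ν) μ then ((∫ x, llr μ ν x ∂μ : ℝ) : EReal) else ⊤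

/-! For measures of equal finite mass, `klDiv` is Mathlib's `ℝ≥0∞`-valued
`InformationTheory.klDiv` (its correction term `ν univ - μ univ` vanishes, and Gibbs' inequality
keeps the value nonnegative), so the claim is the data processing inequality for the measurable
map `Prod.fst`. -/

lemma klDiv_eq_coe_klDiv {α : Type*} [MeasurableSpace α] {μ ν : Measure α}
    [IsFiniteMeasure μ] [IsFiniteMeasure ν] (h_univ : μ Set.univ = ν Set.univ) :
    klDiv μ ν = (InformationTheory.klDiv μ ν : EReal) := by
  by_cases h : μ ≪ ν ∧ Integrable (llr μ ν) μ
  · rw [klDiv, if_pos h, ← InformationTheory.toReal_klDiv_of_measure_eq h.1 h_univ,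
      EReal.coe_ennreal_toReal (InformationTheory.klDiv_ne_top h.1 h.2)]
  · rw [klDiv, if_neg h, InformationTheory.klDiv_eq_top_iff.mpr (fun hac hint ↦ h ⟨hac, hint⟩),
      EReal.coe_ennreal_top]

/-- for probability measures `μ` and `ν` on a product `α × β`, the
KL divergence between the first marginals is at most the KL divergence between the
joint measures: `klDiv (μ.map Prod.fst) (ν.map Prod.fst) ≤ klDiv μ ν`. -/
theorem klDiv_map_fst_le {α β : Type*} [MeasurableSpace α] [MeasurableSpace β]
    (μ ν : Measure (α × β)) [IsProbabilityMeasure μ] [IsProbabilityMeasure ν] :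
    klDiv (μ.map Prod.fst) (ν.map Prod.fst) ≤ klDiv μ ν := by
  have h_univ : μ Set.univ = ν Set.univ := by simp
  have h_univ_fst : μ.map Prod.fst Set.univ = ν.map Prod.fst Set.univ := by
    simp [measurable_fst]
  rw [klDiv_eq_coe_klDiv h_univ_fst, klDiv_eq_coe_klDiv h_univ]
  exact EReal.coe_ennreal_le_coe_ennreal_iff.mpr
    (InformationTheory.klDiv_map_le μ ν measurable_fst)
end

section
/- Quadratic forms in the inverse of a positive definite matrix are nondecreasing under enlarging the matrix: let A be an (n+1)×(n+1) real positive definite matrix, let B be its n×n leading principal submatrix (B i j = A (castSucc i) (castSucc j)), let v : Fin (n+1) → ℝ and let w : Fin n → ℝ be its restriction (w i = v (castSucc i)). Then wᵀ B⁻¹ w ≤ vᵀ A⁻¹ v. -/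
/-!
For positive definite `A`, completing the square gives the variational formula
`vᵀ A⁻¹ v = max_x (2 vᵀx - xᵀ A x)`, attained at `x = A⁻¹ v`. For the principal submatrix
`B` the maximum is taken over the vectors supported on the first `n` coordinates only,
since `xᵀ A x = yᵀ B y` and `vᵀ x = wᵀ y` when `x` extends `y` by zero; a maximum over
fewer vectors is smaller.
-/

open Matrix

namespace Matrix

variable {m n : Type*} [Fintype m] [Fintype n]

theorem IsSymm.dotProduct_mulVec_comm {R : Type*} [CommSemiring R] {A : Matrix n n R}
    (hA : A.IsSymm) (u x : n → R) : u ⬝ᵥ (A *ᵥ x) = (A *ᵥ u) ⬝ᵥ x := by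
  rw [dotProduct_mulVec, ← mulVec_transpose, hA.eq]

theorem mulVec_inv_mulVec_of_isUnit [DecidableEq n] {R : Type*} [CommRing R]
    {A : Matrix n n R} (hA : IsUnit A) (v : n → R) : A *ᵥ (A⁻¹ *ᵥ v) = v := by
  rw [mulVec_mulVec, mul_nonsing_inv _ ((isUnit_iff_isUnit_det A).mp hA), one_mulVec]

theorem PosDef.two_mul_dotProduct_sub_le [DecidableEq n] {A : Matrix n n ℝ} (hA : A.PosDef)
    (v x : n → ℝ) : 2 * (v ⬝ᵥ x) - x ⬝ᵥ (A *ᵥ x) ≤ v ⬝ᵥ (A⁻¹ *ᵥ v) := by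
  set u := A⁻¹ *ᵥ v
  have hAu : A *ᵥ u = v := mulVec_inv_mulVec_of_isUnit hA.isUnit v
  have hsymm : A.IsSymm := isHermitian_iff_isSymm.mp hA.isHermitian
  have hnonneg : 0 ≤ (x - u) ⬝ᵥ (A *ᵥ (x - u)) := by
    simpa using hA.posSemidef.dotProduct_mulVec_nonneg (x - u)
  have hsquare : (x - u) ⬝ᵥ (A *ᵥ (x - u)) = x ⬝ᵥ (A *ᵥ x) - 2 * (v ⬝ᵥ x) + v ⬝ᵥ u := by
    simp only [mulVec_sub, dotProduct_sub, sub_dotProduct, hAu, hsymm.dotProduct_mulVec_comm u x]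
    rw [dotProduct_comm x v, dotProduct_comm u v]
    ring
  linarith

section ExtendByZero

variable {R : Type*} [NonUnitalNonAssocSemiring R] {e : m → n}

theorem dotProduct_extend_zero (he : Function.Injective e) (u : n → R) (y : m → R) :
    u ⬝ᵥ Function.extend e y 0 = (u ∘ e) ⬝ᵥ y := by
  refine (Fintype.sum_of_injective e he _ _ (fun j hj ↦ ?_) fun i ↦ ?_).symm
  · simp [Function.extend_apply' _ _ _ (by simpa using hj)]
  · simp [he.extend_apply]

theorem mulVec_extend_zero_comp (he : Function.Injective e) (A : Matrix n n R) (y : m → R) :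
    (A *ᵥ Function.extend e y 0) ∘ e = A.submatrix e e *ᵥ y := by
  ext i
  exact dotProduct_extend_zero he (A (e i)) y

end ExtendByZero

theorem PosDef.dotProduct_inv_submatrix_mulVec_le [DecidableEq m] [DecidableEq n]
    {A : Matrix n n ℝ} (hA : A.PosDef) {e : m → n} (he : Function.Injective e) (v : n → ℝ) :
    (v ∘ e) ⬝ᵥ ((A.submatrix e e)⁻¹ *ᵥ (v ∘ e)) ≤ v ⬝ᵥ (A⁻¹ *ᵥ v) := by
  set y := (A.submatrix e e)⁻¹ *ᵥ (v ∘ e)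
  have hBy : A.submatrix e e *ᵥ y = v ∘ e :=
    mulVec_inv_mulVec_of_isUnit (hA.submatrix he).isUnit _
  have h := hA.two_mul_dotProduct_sub_le v (Function.extend e y 0)
  rw [dotProduct_comm (Function.extend e y 0), dotProduct_extend_zero he,
    dotProduct_extend_zero he, mulVec_extend_zero_comp he, hBy] at h
  linarith

end Matrix

/-- quadratic forms in the inverse of a positive definite matrix are
nondecreasing under enlarging the matrix: if `A` is an `(n+1)×(n+1)` real positive
definite matrix, `B` is its `n×n` leading principal submatrix, `v : Fin (n+1) → ℝ`,
and `w` is the restriction of `v` to the first `n` coordinates, then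
`wᵀ B⁻¹ w ≤ vᵀ A⁻¹ v`. -/
theorem quadForm_inv_submatrix_le (n : ℕ) (A : Matrix (Fin (n + 1)) (Fin (n + 1)) ℝ)
    (hA : A.PosDef) (B : Matrix (Fin n) (Fin n) ℝ)
    (hB : ∀ i j : Fin n, B i j = A i.castSucc j.castSucc)
    (v : Fin (n + 1) → ℝ) (w : Fin n → ℝ) (hw : ∀ i : Fin n, w i = v i.castSucc) :
    w ⬝ᵥ (B⁻¹ *ᵥ w) ≤ v ⬝ᵥ (A⁻¹ *ᵥ v) := by
  obtain rfl : B = A.submatrix Fin.castSucc Fin.castSucc := Matrix.ext hB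
  obtain rfl : w = v ∘ Fin.castSucc := funext hw
  exact hA.dotProduct_inv_submatrix_mulVec_le (Fin.castSucc_injective n) v
end

section
/- At the worst-case correlation, the better sensor gains nothing from collaboration in estimation: if |σX·b| < σY·|a| and ρ* = (σX·b)/(σY·a), then with v = (a,b), the bivariate Gaussian coalition Fisher information satisfies vᵀ Σ(ρ*)⁻¹ v = a²/σX², i.e., it equals the larger of the two individual Fisher informations a²/σX² and b²/σY². -/
open Matrix

/-! At `ρ* = σX·b/(σY·a)` the first column `(σX², ρ*σXσY)` of `Σ(ρ*)` is proportional to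
`v = (a, b)`, so `Σ(ρ*)⁻¹ v = (a/σX², 0)` and `vᵀ Σ(ρ*)⁻¹ v = a²/σX²`. The hypothesis
`|σX·b| < σY·|a|` says exactly that `|ρ*| < 1`, which makes `Σ(ρ*)` invertible. -/

def bivariateCov (σX σY ρ : ℝ) : Matrix (Fin 2) (Fin 2) ℝ :=
  !![σX ^ 2, ρ * σX * σY; ρ * σX * σY, σY ^ 2]

theorem Matrix.inv_mulVec_eq_of_mulVec_eq {n α : Type*} [Fintype n] [DecidableEq n]
    [CommRing α] {A : Matrix n n α} (hA : IsUnit A.det) {u v : n → α} (h : A *ᵥ v = u) :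
    A⁻¹ *ᵥ u = v := by
  rw [← h, mulVec_mulVec, nonsing_inv_mul A hA, one_mulVec]

theorem det_bivariateCov (σX σY ρ : ℝ) :
    (bivariateCov σX σY ρ).det = σX ^ 2 * σY ^ 2 * (1 - ρ ^ 2) := by
  rw [bivariateCov, det_fin_two_of]
  ring

theorem det_bivariateCov_ne_zero {σX σY ρ : ℝ} (hσX : σX ≠ 0) (hσY : σY ≠ 0) (hρ : |ρ| < 1) :
    (bivariateCov σX σY ρ).det ≠ 0 := by
  have hρ2 : ρ ^ 2 < 1 := (sq_lt_one_iff_abs_lt_one ρ).mpr hρ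
  rw [det_bivariateCov]
  exact mul_ne_zero (by positivity) (sub_ne_zero.mpr hρ2.ne')

theorem abs_div_lt_one_of_abs_lt {σX σY a b : ℝ} (hσY : 0 < σY) (hab : |σX * b| < σY * |a|) :
    |σX * b / (σY * a)| < 1 := by
  have hpos : 0 < |σY * a| := by
    rw [abs_mul, abs_of_pos hσY]
    exact (abs_nonneg _).trans_lt hab
  rwa [abs_div, div_lt_one hpos, abs_mul σY, abs_of_pos hσY]

theorem bivariateCov_mulVec_worstCase {σX σY a b : ℝ} (hσX : σX ≠ 0) (hσY : σY ≠ 0)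
    (ha : a ≠ 0) :
    bivariateCov σX σY (σX * b / (σY * a)) *ᵥ ![a / σX ^ 2, 0] = ![a, b] := by
  ext i
  fin_cases i <;> simp [bivariateCov, mulVec_cons, field]

/-- at the worst-case correlation `ρ* = σX·b/(σY·a)` (which lies in (−1,1)
when `|σX·b| < σY·|a|`), the better sensor gains nothing from collaboration in
estimation: with `v = (a,b)`, the coalition Fisher information `vᵀ Σ(ρ*)⁻¹ v` equals
`a²/σX²`, the larger of the two individual Fisher informations. -/
theorem fisher_worst_case_correlation (σX σY a b : ℝ) (hσX : 0 < σX) (hσY : 0 < σY)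
    (ha : a ≠ 0) (hab : |σX * b| < σY * |a|)
    (ρstar : ℝ) (hρ : ρstar = σX * b / (σY * a)) :
    ![a, b] ⬝ᵥ ((!![σX ^ 2, ρstar * σX * σY; ρstar * σX * σY, σY ^ 2])⁻¹ *ᵥ ![a, b]) =
      a ^ 2 / σX ^ 2 := by
  subst hρ
  have hdet := det_bivariateCov_ne_zero hσX.ne' hσY.ne' (abs_div_lt_one_of_abs_lt hσY hab)
  have hsolve := inv_mulVec_eq_of_mulVec_eq hdet.isUnit
    (bivariateCov_mulVec_worstCase (b := b) hσX.ne' hσY.ne' ha)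
  rw [bivariateCov] at hsolve
  rw [hsolve]
  simp only [dotProduct, Fin.sum_univ_two, cons_val_zero, cons_val_one]
  ring
end

section
/- At the worst-case correlation, the better sensor gains nothing from collaboration in detection: if 0 < σX < σY and ρ* = σX/σY, then 1ᵀ Σ(ρ*)⁻¹ 1 = 1/σX², i.e., the bivariate Gaussian coalition KLD ((θ1−θ0)²/2)·1ᵀ Σ(ρ*)⁻¹ 1 equals the larger individual KLD (θ1−θ0)²/(2σX²). -/
open Matrix

/-- at the worst-case correlation `ρ* = σX/σY` (with `0 < σX < σY`),
the better sensor gains nothing from collaboration in detection: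
`1ᵀ Σ(ρ*)⁻¹ 1 = 1/σX²`, so that the coalition KLD `((θ1−θ0)²/2)·1ᵀ Σ(ρ*)⁻¹ 1`
equals the larger individual KLD `(θ1−θ0)²/(2σX²)`. -/
theorem kld_worst_case_correlation (σX σY : ℝ) (hσX : 0 < σX) (hσXY : σX < σY)
    (ρstar : ℝ) (hρ : ρstar = σX / σY) :
    ![(1 : ℝ), 1] ⬝ᵥ ((!![σX ^ 2, ρstar * σX * σY; ρstar * σX * σY, σY ^ 2])⁻¹ *ᵥ
      ![(1 : ℝ), 1]) = 1 / σX ^ 2 := by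
  have hY : (0:ℝ) < σY := hσX.trans hσXY
  have hoff : ρstar * σX * σY = σX ^ 2 := by
    rw [hρ]; field_simp
  rw [hoff]
  have hdet : (!![σX ^ 2, σX ^ 2; σX ^ 2, σY ^ 2]).det = σX ^ 2 * σY ^ 2 - σX ^ 2 * σX ^ 2 := by
    simp [Matrix.det_fin_two_of]
  have hdetne : (!![σX ^ 2, σX ^ 2; σX ^ 2, σY ^ 2]).det ≠ 0 := by
    rw [hdet]
    have hlt : σX ^ 2 < σY ^ 2 := by nlinarith
    nlinarith [mul_pos (pow_pos hσX 2) (sub_pos.mpr hlt)]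
  rw [Matrix.inv_def, Matrix.adjugate_fin_two, Ring.inverse_eq_inv']
  simp [Matrix.smul_mulVec, Matrix.mulVec, dotProduct, hdet,
    Fin.sum_univ_two]
  have h1 : σY ^ 2 - σX ^ 2 ≠ 0 := by nlinarith
  have h2 : σX ^ 2 ≠ 0 := by positivity
  have hlt : σX ^ 2 < σY ^ 2 := by nlinarith
  have h3 : σY ^ 2 * σX ^ 2 - σX ^ 4 ≠ 0 := by
    nlinarith [mul_pos (pow_pos hσX 2) (sub_pos.mpr hlt)]
  have h5 : (σX ^ 2 * σY ^ 2 - σX ^ 2 * σX ^ 2) = σX ^ 2 * (σY ^ 2 - σX ^ 2) := by ring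
  rw [h5, mul_inv]
  field_simp
  ring
end

section
/- Collaboration never degrades the better sensor's detection performance below its individual performance: if 0 < σX ≤ σY, then for every ρ ∈ (−1,1), 1ᵀ Σ(ρ)⁻¹ 1 ≥ 1/σX², i.e., (σX² + σY² − 2ρσXσY)/(σX²σY²(1−ρ²)) ≥ 1/σX². -/
/-- collaboration never degrades the better sensor's detection performance
below its individual performance: if `0 < σX ≤ σY`, then for every `ρ ∈ (−1,1)`,
`1ᵀ Σ(ρ)⁻¹ 1 = (σX² + σY² − 2ρσXσY)/(σX²σY²(1−ρ²)) ≥ 1/σX²`. -/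
theorem kld_coalition_ge_individual (σX σY : ℝ) (hσX : 0 < σX) (hσXY : σX ≤ σY) :
    ∀ ρ ∈ Set.Ioo (-1 : ℝ) 1,
      (σX ^ 2 + σY ^ 2 - 2 * ρ * σX * σY) / (σX ^ 2 * σY ^ 2 * (1 - ρ ^ 2)) ≥
        1 / σX ^ 2 := by
  rintro ρ ⟨h1, h2⟩
  have hσY : 0 < σY := lt_of_lt_of_le hσX hσXY
  have hρ : 0 < 1 - ρ ^ 2 := by nlinarith
  rw [ge_iff_le, div_le_div_iff₀ (by positivity) (by positivity)]
  nlinarith [sq_nonneg (σX - ρ * σY), sq_nonneg σX, sq_nonneg σY]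
end
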